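/- Let Φ ≻ 0, let F : ℝ^q ⇉ ℝ^q be such that Φ^{-1}F is maximally monotone in ⟨·,·⟩_Φ and (1/S)-inverse Lipschitz in ‖·‖_Φ (S > 0). Then the resolvent (Id + Φ^{-1}F)^{-1} is a contraction in ‖·‖_Φ with rate S/√(S²+1) < 1. -/

import Mathlib

noncomputable section
open Matrix

abbrev Evec (q : ℕ) := EuclideanSpace ℝ (Fin q)

/-- The `Φ`-weighted inner product `⟨u, v⟩_Φ = uᵀΦv`. -/
noncomputable def wip {q : ℕ} (Φ : Matrix (Fin q) (Fin q) ℝ) (u v : Evec q) : ℝ :=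
  inner ℝ (Matrix.toEuclideanLin Φ u) v

/-- The `Φ`-weighted norm `‖v‖_Φ = √(vᵀΦv)`. -/
noncomputable def wnorm {q : ℕ} (Φ : Matrix (Fin q) (Fin q) ℝ) (v : Evec q) : ℝ :=
  Real.sqrt (wip Φ v v)

/-!
Write `L` for the symmetric square root of `Φ`, so that `⟨u, v⟩_Φ = ⟪L u, L v⟫`; conjugating by `L`
turns `G` into a maximally monotone operator on a Euclidean space, and it suffices to work there.

The resolvent is defined everywhere by Minty's theorem, proved through the Cayley transform:
monotonicity makes `ω + u ↦ ω - u` nonexpansive on the graph, Kirszbraun's theorem extends it to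
one more point `p`, and maximality puts `((p + z)/2, (p - z)/2)` into the graph. For finitely many
balls `B(bᵢ, rᵢ)`, Kirszbraun's theorem comes from a minimizer `z` of `maxᵢ (‖z - bᵢ‖² - rᵢ²)`:
`z` is a convex combination of the active centres, and the variance identity
`2 ∑ wᵢ ‖∑ wⱼ xⱼ - xᵢ‖² = ∑ wᵢ wⱼ ‖xᵢ - xⱼ‖²` shows that the minimum is `≤ 0`; compactness of
balls passes to infinitely many.

Uniqueness and the rate come from expanding `ω - ω' = (v - v') + U` with `U` a difference of values
of `G`: monotonicity gives `‖ω - ω'‖² ≥ ‖v - v'‖² + ‖U‖² ≥ (1 + 1/S²) ‖v - v'‖²`.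
-/

open Finset Filter Topology RealInnerProductSpace

section Kirszbraun

variable {E : Type*} [NormedAddCommGroup E] [InnerProductSpace ℝ E] {ι : Type*}

theorem sum_mul_norm_sub_sq_eq {s : Finset ι} {w : ι → ℝ} (hw : ∑ i ∈ s, w i = 1)
    (x : ι → E) (p : E) :
    ∑ i ∈ s, w i * ‖p - x i‖ ^ 2 =
      ‖p - ∑ j ∈ s, w j • x j‖ ^ 2 + ∑ i ∈ s, w i * ‖∑ j ∈ s, w j • x j - x i‖ ^ 2 := by
  set c := ∑ j ∈ s, w j • x j
  have hcross : ∑ i ∈ s, w i * ⟪p - c, c - x i⟫ = 0 := by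
    simp_rw [← real_inner_smul_right]
    rw [← inner_sum]
    simp_rw [smul_sub]
    rw [sum_sub_distrib, ← sum_smul, hw, one_smul, sub_self, inner_zero_right]
  calc ∑ i ∈ s, w i * ‖p - x i‖ ^ 2
      = ∑ i ∈ s, (w i * ‖p - c‖ ^ 2 + 2 * (w i * ⟪p - c, c - x i⟫) + w i * ‖c - x i‖ ^ 2) := by
        refine sum_congr rfl fun i _ => ?_
        rw [← sub_add_sub_cancel p c (x i), norm_add_sq_real]
        ring
    _ = ‖p - c‖ ^ 2 + ∑ i ∈ s, w i * ‖c - x i‖ ^ 2 := by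
        rw [sum_add_distrib, sum_add_distrib, ← sum_mul, hw, ← mul_sum, hcross]
        ring

theorem two_mul_sum_mul_norm_sum_smul_sub_sq {s : Finset ι} {w : ι → ℝ} (hw : ∑ i ∈ s, w i = 1)
    (x : ι → E) :
    2 * ∑ i ∈ s, w i * ‖∑ j ∈ s, w j • x j - x i‖ ^ 2 =
      ∑ i ∈ s, ∑ j ∈ s, w i * w j * ‖x i - x j‖ ^ 2 := by
  set V := ∑ i ∈ s, w i * ‖∑ j ∈ s, w j • x j - x i‖ ^ 2
  calc 2 * V = ∑ i ∈ s, w i * (‖x i - ∑ j ∈ s, w j • x j‖ ^ 2 + V) := by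
        simp_rw [mul_add, sum_add_distrib, ← sum_mul, hw, norm_sub_rev (x _)]
        ring
    _ = ∑ i ∈ s, ∑ j ∈ s, w i * w j * ‖x i - x j‖ ^ 2 := by
        refine sum_congr rfl fun i _ => ?_
        rw [← sum_mul_norm_sub_sq_eq hw, mul_sum]
        simp_rw [mul_assoc]

theorem sum_mul_norm_sum_smul_sub_sq_le {s : Finset ι} {w : ι → ℝ} (hw₀ : ∀ i ∈ s, 0 ≤ w i)
    (hw : ∑ i ∈ s, w i = 1) {a b : ι → E}
    (hab : ∀ i ∈ s, ∀ j ∈ s, ‖b i - b j‖ ≤ ‖a i - a j‖) (p : E) :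
    ∑ i ∈ s, w i * ‖∑ j ∈ s, w j • b j - b i‖ ^ 2 ≤ ∑ i ∈ s, w i * ‖p - a i‖ ^ 2 := by
  have hvar : 2 * ∑ i ∈ s, w i * ‖∑ j ∈ s, w j • b j - b i‖ ^ 2 ≤
      2 * ∑ i ∈ s, w i * ‖∑ j ∈ s, w j • a j - a i‖ ^ 2 := by
    rw [two_mul_sum_mul_norm_sum_smul_sub_sq hw, two_mul_sum_mul_norm_sum_smul_sub_sq hw]
    gcongr with i hi j hj
    · exact mul_nonneg (hw₀ i hi) (hw₀ j hj)
    · exact hab i hi j hj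
  rw [sum_mul_norm_sub_sq_eq hw a p]
  nlinarith [sq_nonneg ‖p - ∑ j ∈ s, w j • a j‖]

theorem exists_inner_pos_of_notMem_convexHull [CompleteSpace E] {K : Set E} (hK : K.Finite)
    {z : E} (hz : z ∉ convexHull ℝ K) : ∃ d : E, ∀ y ∈ K, 0 < ⟪d, z - y⟫ := by
  obtain ⟨f, u, hfK, hfz⟩ := geometric_hahn_banach_closed_point (convex_convexHull ℝ K)
    (hK.isCompact_convexHull (𝕜 := ℝ)).isClosed hz
  refine ⟨(InnerProductSpace.toDual ℝ E).symm f, fun y hy => ?_⟩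
  rw [inner_sub_right, InnerProductSpace.toDual_symm_apply, InnerProductSpace.toDual_symm_apply]
  linarith [hfK y (subset_convexHull ℝ K hy)]

theorem eventually_norm_sub_smul_sq_lt {x d : E} (h : 0 < ⟪d, x⟫) :
    ∀ᶠ t in 𝓝[>] (0 : ℝ), ‖x - t • d‖ ^ 2 < ‖x‖ ^ 2 := by
  have hsmall : ∀ᶠ t in 𝓝[>] (0 : ℝ), t * ‖d‖ ^ 2 < 2 * ⟪d, x⟫ :=
    nhdsWithin_le_nhds <| (continuous_id.mul continuous_const).continuousAt.eventually_lt
      continuousAt_const (by simpa using h)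
  filter_upwards [hsmall, self_mem_nhdsWithin] with t ht (ht₀ : 0 < t)
  rw [norm_sub_sq_real, norm_smul, real_inner_smul_right, real_inner_comm, Real.norm_eq_abs,
    abs_of_pos ht₀]
  nlinarith

/-- `z` minimizes `y ↦ maxᵢ (‖y - b i‖² - c i)`, with minimum `m`; the maximum is then attained
at centres `b i` having `z` in their convex hull. -/
theorem mem_convexHull_of_forall_exists_le [CompleteSpace E] {s : Finset ι} (b : ι → E)
    (c : ι → ℝ) {z : E} {m : ℝ} (hz : ∀ i ∈ s, ‖z - b i‖ ^ 2 - c i ≤ m)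
    (hmin : ∀ y, ∃ i ∈ s, m ≤ ‖y - b i‖ ^ 2 - c i) :
    z ∈ convexHull ℝ (b '' {i | i ∈ s ∧ ‖z - b i‖ ^ 2 - c i = m}) := by
  by_contra hhull
  obtain ⟨d, hd⟩ := exists_inner_pos_of_notMem_convexHull
    ((s.finite_toSet.subset fun i hi => hi.1).image b) hhull
  have hdescent : ∀ i ∈ s, ∀ᶠ t in 𝓝[>] (0 : ℝ), ‖z - t • d - b i‖ ^ 2 - c i < m := by
    intro i hi
    rcases (hz i hi).lt_or_eq with hlt | heq
    · have hcont : Continuous fun t : ℝ => ‖z - t • d - b i‖ ^ 2 - c i := by fun_prop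
      exact nhdsWithin_le_nhds <| hcont.continuousAt.eventually_lt continuousAt_const
        (by simpa using hlt)
    · have hpos := hd (b i) ⟨i, ⟨hi, heq⟩, rfl⟩
      filter_upwards [eventually_norm_sub_smul_sq_lt hpos] with t ht
      rw [sub_right_comm]
      linarith
  obtain ⟨t, ht⟩ := ((eventually_all_finset s).2 hdescent).exists
  obtain ⟨i, hi, hle⟩ := hmin (z - t • d)
  exact (ht i hi).not_ge hle

variable [FiniteDimensional ℝ E]

theorem exists_forall_sup'_norm_sub_sq_sub_le {s : Finset ι} (hs : s.Nonempty) (b : ι → E)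
    (c : ι → ℝ) : ∃ z, ∀ y, s.sup' hs (fun i => ‖z - b i‖ ^ 2 - c i) ≤
      s.sup' hs (fun i => ‖y - b i‖ ^ 2 - c i) := by
  have ⟨i₀, hi₀⟩ := hs
  refine Continuous.exists_forall_le (Continuous.finset_sup'_apply hs fun i _ => by fun_prop)
    (tendsto_atTop_mono (fun y => le_sup' (fun i => ‖y - b i‖ ^ 2 - c i) hi₀) ?_)
  have hdist : Tendsto (fun y => ‖y - b i₀‖) (cocompact E) atTop := by
    simpa [dist_eq_norm] using tendsto_dist_right_cocompact_atTop (b i₀)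
  exact tendsto_atTop_add_const_right _ _ ((tendsto_pow_atTop two_ne_zero).comp hdist)

theorem exists_forall_norm_sub_le_of_finset (s : Finset ι) {a b : ι → E}
    (hab : ∀ i ∈ s, ∀ j ∈ s, ‖b i - b j‖ ≤ ‖a i - a j‖) (p : E) :
    ∃ z, ∀ i ∈ s, ‖z - b i‖ ≤ ‖p - a i‖ := by
  rcases s.eq_empty_or_nonempty with rfl | hs
  · exact ⟨p, by simp⟩
  set c := fun i => ‖p - a i‖ ^ 2
  obtain ⟨z, hz⟩ := exists_forall_sup'_norm_sub_sq_sub_le hs b c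
  set m := s.sup' hs fun i => ‖z - b i‖ ^ 2 - c i
  have hle : ∀ i ∈ s, ‖z - b i‖ ^ 2 - c i ≤ m := fun i hi =>
    le_sup' (fun i => ‖z - b i‖ ^ 2 - c i) hi
  have hhull := mem_convexHull_of_forall_exists_le b c hle fun y => by
    obtain ⟨i, hi, h⟩ := exists_mem_eq_sup' hs fun i => ‖y - b i‖ ^ 2 - c i
    exact ⟨i, hi, h ▸ hz y⟩
  obtain ⟨κ, _, w, y, hw₀, hw, hy, rfl⟩ := mem_convexHull_iff_exists_fintype.1 hhull
  choose j hj hjy using hy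
  have hm : m ≤ 0 := by
    have hsum := sum_mul_norm_sum_smul_sub_sq_le (s := univ) (fun k _ => hw₀ k) hw
      (a := a ∘ j) (b := b ∘ j) (fun k _ l _ => hab _ (hj k).1 _ (hj l).1) p
    simp only [Function.comp_apply, hjy] at hsum
    calc m = ∑ k, w k * (‖∑ l, w l • y l - y k‖ ^ 2 - c (j k)) := by
          rw [← mul_one m, ← hw, mul_sum]
          exact sum_congr rfl fun k _ => by rw [← hjy k, (hj k).2, mul_comm]
      _ ≤ 0 := by
          simp only [mul_sub, sum_sub_distrib, c]
          linarith
  refine ⟨∑ k, w k • y k, fun i hi => ?_⟩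
  rw [← pow_le_pow_iff_left₀ (norm_nonneg _) (norm_nonneg _) two_ne_zero]
  linarith [hle i hi]

/-- Kirszbraun's theorem, for one new point. -/
theorem exists_forall_norm_sub_le {a b : ι → E} (hab : ∀ i j, ‖b i - b j‖ ≤ ‖a i - a j‖)
    (p : E) : ∃ z, ∀ i, ‖z - b i‖ ≤ ‖p - a i‖ := by
  classical
  rcases isEmpty_or_nonempty ι with hι | ⟨⟨i₀⟩⟩
  · exact ⟨p, isEmptyElim⟩
  obtain ⟨z, -, hz⟩ := (isCompact_closedBall (b i₀) ‖p - a i₀‖).inter_iInter_nonempty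
    (fun i => Metric.closedBall (b i) ‖p - a i‖) (fun _ => Metric.isClosed_closedBall)
    fun u => by
      obtain ⟨z, hz⟩ := exists_forall_norm_sub_le_of_finset (insert i₀ u)
        (fun i _ j _ => hab i j) p
      refine ⟨z, ?_, Set.mem_iInter₂.2 fun i hi => ?_⟩ <;>
        simp only [Metric.mem_closedBall, dist_eq_norm]
      exacts [hz i₀ (mem_insert_self _ _), hz i (mem_insert_of_mem hi)]
  exact ⟨z, fun i => by simpa [dist_eq_norm] using Set.mem_iInter.1 hz i⟩

end Kirszbraun

section MonotoneOperator

variable {E : Type*} [NormedAddCommGroup E] [InnerProductSpace ℝ E]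

def IsMonotoneOperator (G : E → Set E) : Prop :=
  ∀ ω ω' u u', u ∈ G ω → u' ∈ G ω' → 0 ≤ ⟪u - u', ω - ω'⟫

def IsMaximalMonotoneOperator (G : E → Set E) : Prop :=
  IsMonotoneOperator G ∧ ∀ ω u, (∀ ω' u', u' ∈ G ω' → 0 ≤ ⟪u - u', ω - ω'⟫) → u ∈ G ω

theorem norm_sub_le_norm_add_of_inner_nonneg {x y : E} (h : 0 ≤ ⟪x, y⟫) : ‖x - y‖ ≤ ‖x + y‖ := by
  rw [← pow_le_pow_iff_left₀ (norm_nonneg _) (norm_nonneg _) two_ne_zero, norm_sub_sq_real,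
    norm_add_sq_real]
  linarith

theorem IsMonotoneOperator.eq_of_sub_mem {G : E → Set E} (hG : IsMonotoneOperator G)
    {ω v v' : E} (hv : ω - v ∈ G v) (hv' : ω - v' ∈ G v') : v = v' := by
  have h := hG _ _ _ _ hv hv'
  rw [sub_sub_sub_cancel_left, ← neg_sub, inner_neg_left, real_inner_self_eq_norm_sq] at h
  rw [← sub_eq_zero, ← norm_eq_zero]
  nlinarith [norm_nonneg (v - v')]

theorem IsMonotoneOperator.norm_sub_le_of_sub_mem {G : E → Set E} (hG : IsMonotoneOperator G)
    {S : ℝ} (hS : 0 < S) (hinv : ∀ ω ω' u u', u ∈ G ω → u' ∈ G ω' →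
      1 / S * ‖ω - ω'‖ ≤ ‖u - u'‖)
    {ω ω' v v' : E} (hv : ω - v ∈ G v) (hv' : ω' - v' ∈ G v') :
    ‖v - v'‖ ≤ S / √(S ^ 2 + 1) * ‖ω - ω'‖ := by
  have hsplit : ω - ω' = (v - v') + ((ω - v) - (ω' - v')) := by abel
  set U := (ω - v) - (ω' - v')
  have hmono : 0 ≤ ⟪v - v', U⟫ := real_inner_comm U (v - v') ▸ hG _ _ _ _ hv hv'
  have hU : ‖v - v'‖ ≤ S * ‖U‖ := by
    have := hinv _ _ _ _ hv hv'
    rwa [one_div, inv_mul_le_iff₀ hS] at this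
  rw [div_mul_eq_mul_div, le_div_iff₀ (by positivity),
    ← pow_le_pow_iff_left₀ (by positivity) (by positivity) two_ne_zero, mul_pow, mul_pow,
    Real.sq_sqrt (by positivity), hsplit, norm_add_sq_real]
  nlinarith [norm_nonneg U, norm_nonneg (v - v')]

variable [FiniteDimensional ℝ E]

/-- **Minty's theorem**. -/
theorem IsMaximalMonotoneOperator.exists_sub_mem {G : E → Set E}
    (hG : IsMaximalMonotoneOperator G) (p : E) : ∃ v, p - v ∈ G v := by
  let a : {x : E × E // x.2 ∈ G x.1} → E := fun i => i.1.1 + i.1.2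
  let b : {x : E × E // x.2 ∈ G x.1} → E := fun i => i.1.1 - i.1.2
  obtain ⟨z, hz⟩ := exists_forall_norm_sub_le (a := a) (b := b) (fun i j => by
    have := norm_sub_le_norm_add_of_inner_nonneg
      (real_inner_comm (i.1.1 - j.1.1) _ ▸ hG.1 _ _ _ _ i.2 j.2)
    convert this using 2 <;> simp only [a, b] <;> abel) p
  refine ⟨(2⁻¹ : ℝ) • (p + z), hG.2 _ _ fun ω' u' hu' => ?_⟩
  set X := p - (ω' + u')
  set Y := z - (ω' - u')
  have hXY : ‖Y‖ ≤ ‖X‖ := hz ⟨(ω', u'), hu'⟩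
  have h₁ : p - (2⁻¹ : ℝ) • (p + z) - u' = (2⁻¹ : ℝ) • (X - Y) := by module
  have h₂ : (2⁻¹ : ℝ) • (p + z) - ω' = (2⁻¹ : ℝ) • (X + Y) := by module
  rw [h₁, h₂, real_inner_smul_left, real_inner_smul_right, inner_sub_left, inner_add_right,
    inner_add_right, real_inner_comm X Y, real_inner_self_eq_norm_sq, real_inner_self_eq_norm_sq]
  nlinarith [norm_nonneg Y]

theorem IsMaximalMonotoneOperator.exists_resolvent_contraction {G : E → Set E}
    (hG : IsMaximalMonotoneOperator G) {S : ℝ} (hS : 0 < S)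
    (hinv : ∀ ω ω' u u', u ∈ G ω → u' ∈ G ω' → 1 / S * ‖ω - ω'‖ ≤ ‖u - u'‖) :
    ∃ J : E → E, (∀ ω v, ω - v ∈ G v ↔ v = J ω) ∧
      ∀ ω ω', ‖J ω - J ω'‖ ≤ S / √(S ^ 2 + 1) * ‖ω - ω'‖ := by
  choose J hJ using hG.exists_sub_mem
  refine ⟨J, fun ω v => ⟨fun hv => hG.1.eq_of_sub_mem hv (hJ ω), fun h => h ▸ hJ ω⟩,
    fun ω ω' => hG.1.norm_sub_le_of_sub_mem hS hinv (hJ ω) (hJ ω')⟩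

theorem exists_resolvent_contraction_of_linearEquiv {F : Type*} [AddCommGroup F] [Module ℝ F]
    (L : F ≃ₗ[ℝ] E) {S : ℝ} (hS : 0 < S) (G : F → Set F)
    (hmono : ∀ ω ω' u u', u ∈ G ω → u' ∈ G ω' → 0 ≤ ⟪L (u - u'), L (ω - ω')⟫)
    (hmax : ∀ ω u, (∀ ω' u', u' ∈ G ω' → 0 ≤ ⟪L (u - u'), L (ω - ω')⟫) → u ∈ G ω)
    (hinv : ∀ ω ω' u u', u ∈ G ω → u' ∈ G ω' → 1 / S * ‖L (ω - ω')‖ ≤ ‖L (u - u')‖) :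
    ∃ J : F → F, (∀ ω v, ω - v ∈ G v ↔ v = J ω) ∧
      ∀ ω ω', ‖L (J ω - J ω')‖ ≤ S / √(S ^ 2 + 1) * ‖L (ω - ω')‖ := by
  let G' : E → Set E := fun x => L.symm ⁻¹' G (L.symm x)
  have hmem : ∀ ω u, u ∈ G ω ↔ L u ∈ G' (L ω) := by simp [G']
  have hG' : IsMaximalMonotoneOperator G' := by
    refine ⟨fun ω ω' u u' hu hu' => ?_, fun ω u h => ?_⟩
    · simpa using hmono _ _ _ _ hu hu'
    · simpa [G'] using hmax (L.symm ω) (L.symm u) fun ω' u' hu' => by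
        simpa using h _ _ ((hmem ω' u').1 hu')
  obtain ⟨J, hJ, hcontr⟩ := hG'.exists_resolvent_contraction hS fun ω ω' u u' hu hu' => by
    simpa using hinv _ _ _ _ hu hu'
  refine ⟨fun ω => L.symm (J (L ω)), fun ω v => ?_, fun ω ω' => ?_⟩
  · rw [hmem, map_sub, hJ, L.eq_symm_apply]
  · simpa using hcontr (L ω) (L ω')

end MonotoneOperator

theorem div_sqrt_sq_add_one_lt_one (S : ℝ) : S / √(S ^ 2 + 1) < 1 := by
  rw [div_lt_one (by positivity)]
  exact (le_abs_self S).trans_lt ((Real.lt_sqrt (abs_nonneg S)).2 (by rw [sq_abs]; linarith))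

open scoped MatrixOrder in
theorem Matrix.PosDef.exists_linearEquiv_wip_eq_inner {q : ℕ} {Φ : Matrix (Fin q) (Fin q) ℝ}
    (hΦ : Φ.PosDef) : ∃ L : Evec q ≃ₗ[ℝ] Evec q, ∀ x y, wip Φ x y = ⟪L x, L y⟫ := by
  set Ψ := CFC.sqrt Φ
  have hinj : Function.Injective (toEuclideanLin Ψ) := fun x y h =>
    WithLp.ofLp_injective 2 <| mulVec_injective_of_isUnit
      ((CFC.isUnit_sqrt_iff Φ).2 hΦ.isUnit) (by simpa using congrArg WithLp.ofLp h)
  refine ⟨.ofInjectiveEndo _ hinj, fun x y => ?_⟩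
  have hΨ : Ψ.IsHermitian := (nonneg_iff_posSemidef.mp (CFC.sqrt_nonneg Φ)).isHermitian
  have hsq : toEuclideanLin Φ x = toEuclideanLin Ψ (toEuclideanLin Ψ x) := by
    ext1; simp [Ψ, mulVec_mulVec, CFC.sqrt_mul_sqrt_self Φ]
  rw [LinearEquiv.coe_ofInjectiveEndo, wip, hsq, isSymmetric_toEuclideanLin_iff.2 hΨ]

theorem wnorm_eq_norm {q : ℕ} {Φ : Matrix (Fin q) (Fin q) ℝ} {L : Evec q ≃ₗ[ℝ] Evec q}
    (hL : ∀ x y, wip Φ x y = ⟪L x, L y⟫) (x : Evec q) : wnorm Φ x = ‖L x‖ := by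
  rw [wnorm, hL, real_inner_self_eq_norm_sq, Real.sqrt_sq (norm_nonneg _)]

/-- If `G = Φ⁻¹F` is maximally monotone in `⟨·,·⟩_Φ` and `(1/S)`-inverse Lipschitz in
`‖·‖_Φ`, then its resolvent `(Id + G)⁻¹` is a contraction in `‖·‖_Φ` with rate
`S/√(S²+1) < 1`. -/
theorem resolvent_contraction_weighted
    (q : ℕ) (S : ℝ) (hS : 0 < S)
    (Φ : Matrix (Fin q) (Fin q) ℝ) (hΦ : Φ.PosDef)
    (G : Evec q → Set (Evec q))
    (hmono : ∀ ω ω' u u', u ∈ G ω → u' ∈ G ω' → (0 : ℝ) ≤ wip Φ (u - u') (ω - ω'))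
    (hmax : ∀ ω u, (∀ ω' u', u' ∈ G ω' → (0 : ℝ) ≤ wip Φ (u - u') (ω - ω')) → u ∈ G ω)
    (hinv : ∀ ω ω' u u', u ∈ G ω → u' ∈ G ω' →
      (1 / S) * wnorm Φ (ω - ω') ≤ wnorm Φ (u - u')) :
    ∃ J : Evec q → Evec q,
      (∀ ω v, ω - v ∈ G v ↔ v = J ω) ∧
      (∀ ω ω', wnorm Φ (J ω - J ω') ≤ (S / Real.sqrt (S ^ 2 + 1)) * wnorm Φ (ω - ω')) ∧
      S / Real.sqrt (S ^ 2 + 1) < 1 := by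
  obtain ⟨L, hL⟩ := hΦ.exists_linearEquiv_wip_eq_inner
  simp only [hL, wnorm_eq_norm hL] at hmono hmax hinv ⊢
  obtain ⟨J, hJ, hcontr⟩ := exists_resolvent_contraction_of_linearEquiv L hS G hmono hmax hinv
  exact ⟨J, hJ, hcontr, div_sqrt_sq_add_one_lt_one S⟩
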